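/- Let d ≥ 2, α ∈ (0,2), and let E be a real d×d matrix all of whose eigenvalues have real part strictly greater than 1, q = trace(E) (so that q > d > α). Let φ : ℝ^d → [0,∞) be continuous, E-homogeneous (φ(c^E x) = c·φ(x) for all c > 0, x ∈ ℝ^d) and such that φ(x) > 0 for x ≠ 0. Then for every nonempty open set U ⊆ ℝ^d and every y ∈ U with y ≠ 0: sup_{x ∈ U ∩ ℚ^d} |φ(x−y)^{1−q/α} − φ(−y)^{1−q/α}| = +∞; consequently ∫_{ℝ^d} ( sup_{x ∈ U ∩ ℚ^d} |φ(x−y)^{1−q/α} − φ(−y)^{1−q/α}| )^α dy = +∞. -/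

import Mathlib

/-!
Since every eigenvalue of `E` has real part `> 1`, `trace E ≥ d ≥ 2 > α`, so the exponent
`p = 1 - q/α` is negative. As `φ` is continuous with `φ 0 = 0` (homogeneity at `c = 2`) and is
positive off `0`, `φ (x - y) ^ p → ∞` as `x → y`, `x ≠ y`. Points with rational coordinates
accumulate at every `y`, so the supremum is `∞` at every `y ∈ U`, a set of positive Lebesgue
measure, and the integral is `∞`.
-/

open MeasureTheory ProbabilityTheory Filter Matrix Real
open scoped Topology ENNReal

noncomputable section

/-- `c ^ A := exp((log c) • A)` for a real square matrix `A` and `c > 0`. -/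
def matPow {d : ℕ} (c : ℝ) (A : Matrix (Fin d) (Fin d) ℝ) : Matrix (Fin d) (Fin d) ℝ :=
  NormedSpace.exp (Real.log c • A)

/-- `x ∈ ℚ^d`: all the coordinates of `x` are rational. -/
def HasRationalCoords {d : ℕ} (x : EuclideanSpace ℝ (Fin d)) : Prop :=
  ∀ i, ∃ r : ℚ, x i = (r : ℝ)

theorem Matrix.card_mul_le_trace_of_le_re_spectrum {n : Type*} [Fintype n] [DecidableEq n]
    (E : Matrix n n ℝ) {c : ℝ} (h : ∀ μ ∈ spectrum ℂ (E.map (Complex.ofReal ·)), c ≤ μ.re) :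
    Fintype.card n * c ≤ E.trace := by
  set A := E.map (Complex.ofReal ·)
  have hcard : Multiset.card A.charpoly.roots = Fintype.card n := by
    rw [Polynomial.splits_iff_card_roots.mp (IsAlgClosed.splits _), charpoly_natDegree_eq_dim]
  have hre : E.trace = (A.charpoly.roots.map Complex.re).sum := by
    have hA : A.trace.re = E.trace := by simp [A, Matrix.trace]
    rw [← hA, trace_eq_sum_roots_charpoly]
    exact map_multiset_sum Complex.reAddGroupHom _
  have hle : ∀ x ∈ A.charpoly.roots.map Complex.re, c ≤ x := by
    simp only [Multiset.mem_map, Polynomial.mem_roots', forall_exists_index, and_imp]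
    rintro _ μ - hμ rfl
    exact h μ (mem_spectrum_of_isRoot_charpoly hμ)
  simpa [hcard, hre] using Multiset.card_nsmul_le_sum hle

theorem dense_setOf_hasRationalCoords (d : ℕ) :
    Dense {x : EuclideanSpace ℝ (Fin d) | HasRationalCoords x} := by
  have : Dense (Set.univ.pi fun _ : Fin d => Set.range ((↑) : ℚ → ℝ)) :=
    dense_pi _ fun _ _ => Rat.denseRange_cast
  convert this.preimage (PiLp.homeomorph 2 _).isOpenMap using 1
  ext x
  simp [HasRationalCoords, PiLp.homeomorph, eq_comm]

theorem frequently_hasRationalCoords_nhdsNE {d : ℕ} [NeZero d] (y : EuclideanSpace ℝ (Fin d)) :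
    ∃ᶠ x in 𝓝[≠] y, HasRationalCoords x :=
  mem_closure_ne_iff_frequently_within.mp ((dense_setOf_hasRationalCoords d).sdiff_singleton y y)

theorem tendsto_rpow_nhdsNE_atTop {X : Type*} [TopologicalSpace X] {g : X → ℝ} {y : X}
    (hg : ContinuousAt g y) (hgy : g y = 0) (hpos : ∀ x, x ≠ y → 0 < g x) {p : ℝ} (hp : p < 0) :
    Tendsto (fun x => g x ^ p) (𝓝[≠] y) atTop := by
  have : Tendsto g (𝓝[≠] y) (𝓝[>] 0) :=
    tendsto_nhdsWithin_iff.mpr ⟨hgy ▸ hg.tendsto.mono_left nhdsWithin_le_nhds,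
      eventually_nhdsWithin_of_forall hpos⟩
  exact (tendsto_rpow_neg_nhdsGT_zero hp).comp this

theorem ENNReal.iSup_ofReal_eq_top {ι : Sort*} {f : ι → ℝ} (hf : ∀ M : ℝ, ∃ i, M ≤ f i) :
    ⨆ i, ENNReal.ofReal (f i) = ⊤ := by
  refine ENNReal.eq_top_of_forall_nnreal_le fun r => ?_
  obtain ⟨i, hi⟩ := hf r
  calc (r : ℝ≥0∞) = ENNReal.ofReal r := ENNReal.ofReal_coe_nnreal.symm
    _ ≤ ENNReal.ofReal (f i) := ENNReal.ofReal_le_ofReal hi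
    _ ≤ ⨆ i, ENNReal.ofReal (f i) := le_iSup (fun i => ENNReal.ofReal (f i)) i

theorem MeasureTheory.lintegral_eq_top_of_eq_top_on {α : Type*} [MeasurableSpace α]
    {μ : Measure α} {f : α → ℝ≥0∞} {s : Set α} (hs : MeasurableSet s) (hμs : μ s ≠ 0)
    (hf : ∀ x ∈ s, f x = ⊤) :
    ∫⁻ x, f x ∂μ = ⊤ := by
  refine top_unique ?_
  calc ⊤ = ∫⁻ _ in s, ⊤ ∂μ := by rw [setLIntegral_const, ENNReal.top_mul hμs]
    _ = ∫⁻ x in s, f x ∂μ := setLIntegral_congr_fun hs fun x hx => (hf x hx).symm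
    _ ≤ ∫⁻ x, f x ∂μ := setLIntegral_le_lintegral s f

theorem exists_hasRationalCoords_le_abs_rpow_sub {d : ℕ} [NeZero d]
    {φ : EuclideanSpace ℝ (Fin d) → ℝ} (hφc : Continuous φ) (hφ0 : φ 0 = 0)
    (hφpos : ∀ x, x ≠ 0 → 0 < φ x) {p : ℝ} (hp : p < 0) {U : Set (EuclideanSpace ℝ (Fin d))}
    (hU : IsOpen U) {y : EuclideanSpace ℝ (Fin d)} (hy : y ∈ U) (b M : ℝ) :
    ∃ x ∈ U, HasRationalCoords x ∧ M ≤ |φ (x - y) ^ p - b| := by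
  have hblow : Tendsto (fun x => |φ (x - y) ^ p - b|) (𝓝[≠] y) atTop :=
    tendsto_abs_atTop_atTop.comp <| tendsto_atTop_add_const_right _ (-b) <|
      tendsto_rpow_nhdsNE_atTop (by fun_prop) (by simpa using hφ0)
        (fun x hx => hφpos _ (sub_ne_zero.mpr hx)) hp
  have hnear : ∀ᶠ x in 𝓝[≠] y, x ∈ U := eventually_nhdsWithin_of_eventually_nhds (hU.mem_nhds hy)
  obtain ⟨x, hxr, hxU, hxM⟩ := ((frequently_hasRationalCoords_nhdsNE y).and_eventually
    (hnear.and (hblow.eventually_ge_atTop M))).exists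
  exact ⟨x, hxU, hxr, hxM⟩

theorem moving_average_kernel_unbounded_general {d : ℕ} (hd : 2 ≤ d)
    (α : ℝ) (hα : α ∈ Set.Ioo (0 : ℝ) 2)
    (E : Matrix (Fin d) (Fin d) ℝ)
    (hspec : ∀ μ ∈ spectrum ℂ (E.map (Complex.ofReal ·)), 1 < μ.re)
    (φ : EuclideanSpace ℝ (Fin d) → ℝ) (hφc : Continuous φ)
    (hφpos : ∀ x, x ≠ 0 → 0 < φ x)
    (hφhom : ∀ c : ℝ, 0 < c → ∀ x : EuclideanSpace ℝ (Fin d),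
      φ (WithLp.toLp 2 ((matPow c E).mulVec x)) = c * φ x)
    (U : Set (EuclideanSpace ℝ (Fin d))) (hU : IsOpen U) (hUne : U.Nonempty) :
    (∀ y ∈ U, y ≠ 0 → ∀ M : ℝ, ∃ x ∈ U, HasRationalCoords x ∧
      M ≤ |φ (x - y) ^ (1 - E.trace / α) - φ (-y) ^ (1 - E.trace / α)|) ∧
    (∫⁻ y : EuclideanSpace ℝ (Fin d),
        (⨆ x : {x : EuclideanSpace ℝ (Fin d) // x ∈ U ∧ HasRationalCoords x},
          ENNReal.ofReal
            |φ ((x : EuclideanSpace ℝ (Fin d)) - y) ^ (1 - E.trace / α) -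
              φ (-y) ^ (1 - E.trace / α)|) ^ α) = ⊤ := by
  have : NeZero d := ⟨by omega⟩
  obtain ⟨hα0, hα2⟩ := hα
  have htrace : (d : ℝ) ≤ E.trace := by
    simpa using E.card_mul_le_trace_of_le_re_spectrum fun μ hμ => (hspec μ hμ).le
  have hp : 1 - E.trace / α < 0 := by
    have h2d : (2 : ℝ) ≤ d := by exact_mod_cast hd
    rw [sub_neg, one_lt_div hα0]
    linarith
  have hφ0 : φ 0 = 0 := by
    have h2 := hφhom 2 two_pos 0
    simp only [WithLp.ofLp_zero, mulVec_zero, WithLp.toLp_zero] at h2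
    linarith
  have hunbdd : ∀ y ∈ U, ∀ M : ℝ, ∃ x ∈ U, HasRationalCoords x ∧
      M ≤ |φ (x - y) ^ (1 - E.trace / α) - φ (-y) ^ (1 - E.trace / α)| := fun y hy =>
    exists_hasRationalCoords_le_abs_rpow_sub hφc hφ0 hφpos hp hU hy _
  refine ⟨fun y hy _ => hunbdd y hy, ?_⟩
  refine lintegral_eq_top_of_eq_top_on hU.measurableSet (hU.measure_pos volume hUne).ne'
    fun y hy => ?_
  rw [ENNReal.iSup_ofReal_eq_top, ENNReal.top_rpow_of_pos hα0]
  intro M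
  obtain ⟨x, hxU, hxr, hx⟩ := hunbdd y hy M
  exact ⟨⟨x, hxU, hxr⟩, hx⟩

/-- Let `d ≥ 2`, `α ∈ (0,2)`, `E` with all eigenvalues of real part `> 1`,
`q = trace E` and `φ` a continuous, `E`-homogeneous function, positive off `0`. Then for
every nonempty open `U` and every `y ∈ U`, `y ≠ 0`, the supremum over `x ∈ U ∩ ℚ^d` of
`|φ(x-y)^{1-q/α} - φ(-y)^{1-q/α}|` is infinite (i.e. unbounded above), and consequently
`∫_{ℝ^d} (sup_{x ∈ U ∩ ℚ^d} |φ(x-y)^{1-q/α} - φ(-y)^{1-q/α}|)^α dy = ∞`. -/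
theorem moving_average_kernel_unbounded {d : ℕ} (hd : 2 ≤ d)
    (α : ℝ) (hα : α ∈ Set.Ioo (0 : ℝ) 2)
    (E : Matrix (Fin d) (Fin d) ℝ)
    (hspec : ∀ μ ∈ spectrum ℂ (E.map (Complex.ofReal ·)), 1 < μ.re)
    (φ : EuclideanSpace ℝ (Fin d) → ℝ) (hφc : Continuous φ) (hφnn : ∀ x, 0 ≤ φ x)
    (hφpos : ∀ x, x ≠ 0 → 0 < φ x)
    (hφhom : ∀ c : ℝ, 0 < c → ∀ x : EuclideanSpace ℝ (Fin d),
      φ (WithLp.toLp 2 ((matPow c E).mulVec x)) = c * φ x)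
    (U : Set (EuclideanSpace ℝ (Fin d))) (hU : IsOpen U) (hUne : U.Nonempty) :
    (∀ y ∈ U, y ≠ 0 → ∀ M : ℝ, ∃ x ∈ U, HasRationalCoords x ∧
      M ≤ |φ (x - y) ^ (1 - E.trace / α) - φ (-y) ^ (1 - E.trace / α)|) ∧
    (∫⁻ y : EuclideanSpace ℝ (Fin d),
        (⨆ x : {x : EuclideanSpace ℝ (Fin d) // x ∈ U ∧ HasRationalCoords x},
          ENNReal.ofReal
            |φ ((x : EuclideanSpace ℝ (Fin d)) - y) ^ (1 - E.trace / α) -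
              φ (-y) ^ (1 - E.trace / α)|) ^ α) = ⊤ :=
  moving_average_kernel_unbounded_general hd α hα E hspec φ hφc hφpos hφhom U hU hUne
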